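/- Let n ≥ 4 be an even integer, let h = n/2, and let i ≥ 1 be an integer. For an integer x, let ⟨x⟩ denote the representative of x modulo n lying in {0, …, n−1}. Define M : {1,…,n} × {1,…,n} → ℤ by M(r,c) = t₁ + t₂ + t₃ + t₄, where t₁ = −(n + 4ni + 1 + 4(c−1)) if r ≡ c + 1 + 2i (mod n) and t₁ = 0 otherwise; t₂ = n + 4ni + 3 + 4(c−1) if r ≡ c + 2 + 2i (mod n) and t₂ = 0 otherwise; t₃ = n + 4ni + 2 + 4⟨c−h−3⟩ if r ≡ c + 2i − h − 1 (mod n) and t₃ = 0 otherwise; t₄ = −(n + 4ni + 4 + 4⟨c−h−3⟩) if r ≡ c + 2i − h (mod n) and t₄ = 0 otherwise. Then for every r ∈ {1,…,n} the sum ∑_{c=1}^{n} M(r,c) = 0, and for every c ∈ {1,…,n} the sum ∑_{r=1}^{n} M(r,c) = 0. -/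

import Mathlib

/-!
`M0` is the sum of four wrapped diagonals, each meeting every row and every column exactly
once. In a column the four entries cancel outright (the constants `-1 + 3 + 2 - 4` vanish and
the column-dependent parts pair off). In row `r`, the columns `c₁, c₃` met by the first and
third diagonals satisfy `c₃ - h - 3 ≡ c₁ - 1 (mod n)`, so the first and third entries add up
to `1`; likewise the second and fourth add up to `-1`.
-/

/-- The contribution of the `i`-th quadruple of added diagonals
`D_{2+2i}, D_{3+2i}, D_{h+1+2i}, D_{h+2+2i}` (case `n ≡ 0 (mod 4)`, `h = n/2`) to the
cell `(r, c)` (with `r, c ∈ {1,…,n}`).  Here `x % n` (with `n > 0`) is the representative of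
`x` modulo `n` lying in `{0,…,n−1}`, and the conditions `r ≡ … (mod n)` are written as
equality of such representatives. -/
def M0 (n h i : ℕ) (r c : ℕ) : ℤ :=
  let N : ℤ := n
  let H : ℤ := h
  let I : ℤ := i
  let R : ℤ := r
  let C : ℤ := c
  (if R % N = (C + 1 + 2 * I) % N then -(N + 4 * N * I + 1 + 4 * (C - 1)) else 0) +
  (if R % N = (C + 2 + 2 * I) % N then N + 4 * N * I + 3 + 4 * (C - 1) else 0) +
  (if R % N = (C + 2 * I - H - 1) % N then N + 4 * N * I + 2 + 4 * ((C - H - 3) % N) else 0) +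
  (if R % N = (C + 2 * I - H) % N then -(N + 4 * N * I + 4 + 4 * ((C - H - 3) % N)) else 0)

open Finset

lemma Int.emod_eq_add_emod_iff_emod_eq_sub_emod {n a c s : ℤ} :
    a % n = (c + s) % n ↔ c % n = (a - s) % n :=
  ⟨fun h => (by simpa using (Int.ModEq.sub_right s h).symm : c ≡ a - s [ZMOD n]),
    fun h => (by simpa using (Int.ModEq.add_right s h).symm : a ≡ c + s [ZMOD n])⟩

/-- The representative in `{1, …, n}` of `b` modulo `n`. -/
def cyclicRep (n : ℕ) (b : ℤ) : ℕ := ((b - 1) % n).toNat + 1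

section cyclicRep

variable {n : ℕ}

lemma cyclicRep_cast (hn : 0 < n) (b : ℤ) : (cyclicRep n b : ℤ) = (b - 1) % n + 1 := by
  rw [cyclicRep, Nat.cast_add, Int.toNat_of_nonneg (Int.emod_nonneg _ (by omega)), Nat.cast_one]

lemma cyclicRep_mem_Icc (hn : 0 < n) (b : ℤ) : cyclicRep n b ∈ Icc 1 n := by
  have := cyclicRep_cast hn b
  have := Int.emod_nonneg (b - 1) (by omega : (n : ℤ) ≠ 0)
  have := Int.emod_lt_of_pos (b - 1) (by omega : (0 : ℤ) < n)
  rw [mem_Icc]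
  omega

lemma cyclicRep_sub_emod (hn : 0 < n) (b t : ℤ) :
    ((cyclicRep n b : ℤ) - t) % n = (b - t) % n := by
  rw [cyclicRep_cast hn]
  exact (by simpa using ((Int.mod_modEq (b - 1) n).add_right 1).sub_right t :
    (b - 1) % n + 1 - t ≡ b - t [ZMOD n])

lemma cyclicRep_sub_emod_eq (hn : 0 < n) {b b' t : ℤ} (h : b - t = b' - 1) :
    ((cyclicRep n b : ℤ) - t) % n = cyclicRep n b' - 1 := by
  rw [cyclicRep_sub_emod hn, h, cyclicRep_cast hn, add_sub_cancel_right]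

lemma emod_eq_emod_iff_eq_cyclicRep (hn : 0 < n) {b : ℤ} {c : ℕ} (hc : c ∈ Icc 1 n) :
    (c : ℤ) % n = b % n ↔ c = cyclicRep n b := by
  rw [mem_Icc] at hc
  have hc' : ((c : ℤ) - 1) % n = c - 1 := Int.emod_eq_of_lt (by omega) (by omega)
  have hshift : (c : ℤ) % n = b % n ↔ ((c : ℤ) - 1) % n = (b - 1) % n :=
    ⟨Int.ModEq.sub_right 1,
      fun h => (by simpa using Int.ModEq.add_right 1 h : (c : ℤ) ≡ b [ZMOD n])⟩
  rw [hshift, hc', ← Int.natCast_inj, cyclicRep_cast hn]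
  omega

lemma sum_Icc_ite_emod_eq {M : Type*} [AddCommMonoid M] (hn : 0 < n) (b : ℤ) (f : ℕ → M) :
    ∑ c ∈ Icc 1 n, (if (c : ℤ) % n = b % n then f c else 0) = f (cyclicRep n b) := by
  calc ∑ c ∈ Icc 1 n, (if (c : ℤ) % n = b % n then f c else 0)
      = ∑ c ∈ Icc 1 n, if c = cyclicRep n b then f c else 0 :=
        sum_congr rfl fun c hc => by simp only [emod_eq_emod_iff_eq_cyclicRep hn hc]
    _ = f (cyclicRep n b) := sum_ite_eq_of_mem' _ _ _ (cyclicRep_mem_Icc hn b)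

end cyclicRep

/-- The wrapped diagonal `{(r, c) : r ≡ c + s (mod n)}` of an `n × n` matrix indexed by
`{1, …, n}`, carrying `v c` in column `c` (the paper's `diag` with `δ = 1`, `ℓ = n`). -/
def wrapDiag {M : Type*} [Zero M] (n : ℕ) (s : ℤ) (v : ℤ → M) (r c : ℕ) : M :=
  if (r : ℤ) % n = ((c : ℤ) + s) % n then v c else 0

section wrapDiag

variable {M : Type*} [AddCommMonoid M] {n : ℕ}

lemma sum_wrapDiag_col (hn : 0 < n) (s : ℤ) (v : ℤ → M) (c : ℕ) :
    ∑ r ∈ Icc 1 n, wrapDiag n s v r c = v c :=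
  sum_Icc_ite_emod_eq hn _ fun _ => v c

lemma sum_wrapDiag_row (hn : 0 < n) (s : ℤ) (v : ℤ → M) (r : ℕ) :
    ∑ c ∈ Icc 1 n, wrapDiag n s v r c = v (cyclicRep n (r - s)) := by
  simp only [wrapDiag, Int.emod_eq_add_emod_iff_emod_eq_sub_emod]
  exact sum_Icc_ite_emod_eq hn _ fun c => v c

end wrapDiag

lemma M0_eq_wrapDiag (n h i r c : ℕ) :
    M0 n h i r c =
      wrapDiag n (1 + 2 * i) (fun C => -(n + 4 * n * i + 1 + 4 * (C - 1))) r c +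
      wrapDiag n (2 + 2 * i) (fun C => n + 4 * n * i + 3 + 4 * (C - 1)) r c +
      wrapDiag n (2 * i - h - 1) (fun C => n + 4 * n * i + 2 + 4 * ((C - h - 3) % n)) r c +
      wrapDiag n (2 * i - h) (fun C => -(n + 4 * n * i + 4 + 4 * ((C - h - 3) % n))) r c := by
  simp only [M0, wrapDiag, add_assoc, add_sub_assoc]

theorem M0_row_col_sums_eq_zero_general (n h i : ℕ) :
    (∀ r ∈ Finset.Icc 1 n, ∑ c ∈ Finset.Icc 1 n, M0 n h i r c = 0) ∧
    (∀ c ∈ Finset.Icc 1 n, ∑ r ∈ Finset.Icc 1 n, M0 n h i r c = 0) := by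
  refine ⟨fun r hr => ?_, fun c hc => ?_⟩
  · have hn : 0 < n := by rw [mem_Icc] at hr; omega
    have h₃₁ : ((cyclicRep n (r - (2 * i - h - 1)) : ℤ) - h - 3) % n =
        cyclicRep n (r - (1 + 2 * i)) - 1 := by
      rw [sub_sub _ (h : ℤ) 3]; exact cyclicRep_sub_emod_eq hn (by ring)
    have h₄₂ : ((cyclicRep n (r - (2 * i - h)) : ℤ) - h - 3) % n =
        cyclicRep n (r - (2 + 2 * i)) - 1 := by
      rw [sub_sub _ (h : ℤ) 3]; exact cyclicRep_sub_emod_eq hn (by ring)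
    simp only [M0_eq_wrapDiag, sum_add_distrib, sum_wrapDiag_row hn, h₃₁, h₄₂]
    ring
  · have hn : 0 < n := by rw [mem_Icc] at hc; omega
    simp only [M0_eq_wrapDiag, sum_add_distrib, sum_wrapDiag_col hn]
    ring

/-- For even `n ≥ 4`, `h = n/2` and `i ≥ 1`, every row sum and every column sum of the
contribution matrix `M0` of the `i`-th quadruple of added diagonals is zero over `ℤ`. -/
theorem M0_row_col_sums_eq_zero (n h i : ℕ) (hn : 4 ≤ n) (heven : Even n)
    (hh : 2 * h = n) (hi : 1 ≤ i) :
    (∀ r ∈ Finset.Icc 1 n, ∑ c ∈ Finset.Icc 1 n, M0 n h i r c = 0) ∧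
    (∀ c ∈ Finset.Icc 1 n, ∑ r ∈ Finset.Icc 1 n, M0 n h i r c = 0) :=
  M0_row_col_sums_eq_zero_general n h i
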